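/- arXiv:2305.13041 — 5 statements merged into one kernel-verified Lean document; each statement's English description precedes it below -/
import Mathlib

section
/- Let G > 0 and μ ∈ ℝ, let g ∈ ℝ^F with ‖g‖² ≤ G and s a vector with ‖s‖² ≤ 1, and suppose a vector v satisfies ‖v‖² = (1−μ)²·‖g‖²·‖s‖²·‖Σ_{j∈S} Σ_{l∈S, l≠j} p_j·p_l·(b_j ⊗ (c_j − c_l))‖²_F / (Σ_{m∈S} p_m)⁴. If D > 0 and 1 − 1/√(d(d−1)·D) ≤ μ ≤ 1, then ‖v‖² ≤ G. -/
/-!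
The triangle inequality and `‖x ⊗ y‖_F = ‖x‖ ‖y‖` bound the Frobenius norm of the aggregated
matrix by `Σ_{j ≠ l} p_j p_l ‖b_j‖ ‖c_j - c_l‖`; Cauchy–Schwarz, with `Σ_{j ≠ l} (p_j p_l)² ≤ (Σ p)⁴`,
turns this into `‖·‖_F² ≤ (Σ p)⁴ D`. Hence `‖v‖² ≤ (1 - μ)² D G`, while the range of `μ` gives
`(1 - μ)² d (d - 1) D ≤ 1` with `d (d - 1) ≥ 1`.
-/

open Finset Matrix

attribute [local instance] Matrix.frobeniusNormedAddCommGroup Matrix.frobeniusNormedSpace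

theorem Matrix.frobenius_norm_sq_eq_sum {m n α : Type*} [Fintype m] [Fintype n]
    [NormedAddCommGroup α] (A : Matrix m n α) :
    ‖A‖ ^ 2 = ∑ i, ∑ j, ‖A i j‖ ^ 2 := by
  rw [frobenius_norm_def, ← Real.sqrt_eq_rpow, Real.sq_sqrt (by positivity)]
  simp only [Real.rpow_two]

theorem Matrix.frobenius_norm_vecMulVec {m n α : Type*} [Fintype m] [Fintype n]
    [NormedRing α] [NormMulClass α] (x : m → α) (y : n → α) :
    ‖vecMulVec x y‖ = ‖WithLp.toLp 2 x‖ * ‖WithLp.toLp 2 y‖ := by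
  have hsq : ‖vecMulVec x y‖ ^ 2 = (‖WithLp.toLp 2 x‖ * ‖WithLp.toLp 2 y‖) ^ 2 := by
    simp only [frobenius_norm_sq_eq_sum, mul_pow, PiLp.norm_sq_eq_of_L2, vecMulVec_apply,
      norm_mul, sum_mul_sum]
  exact (pow_left_inj₀ (norm_nonneg _) (by positivity) two_ne_zero).mp hsq

section OrderedRing

variable {R ι : Type*}

theorem Finset.sum_mul_le_sum_mul_sum [Semiring R] [PartialOrder R] [IsOrderedRing R]
    (s : Finset ι) {a f : ι → R} (ha : ∀ i ∈ s, 0 ≤ a i) (hf : ∀ i ∈ s, 0 ≤ f i) :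
    ∑ i ∈ s, a i * f i ≤ (∑ i ∈ s, a i) * ∑ i ∈ s, f i := by
  rw [sum_mul]
  exact sum_le_sum fun i hi => mul_le_mul_of_nonneg_left (single_le_sum hf hi) (ha i hi)

variable [CommRing R] [LinearOrder R] [IsStrictOrderedRing R] [DecidableEq ι]

theorem Finset.sum_sum_erase_sq_mul_le (S : Finset ι) {p : ι → R} (hp : ∀ j ∈ S, 0 ≤ p j) :
    ∑ j ∈ S, ∑ l ∈ S.erase j, (p j * p l) ^ 2 ≤ (∑ j ∈ S, p j) ^ 4 :=
  calc ∑ j ∈ S, ∑ l ∈ S.erase j, (p j * p l) ^ 2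
      ≤ ∑ j ∈ S, ∑ l ∈ S, (p j * p l) ^ 2 :=
        sum_le_sum fun j _ => sum_le_sum_of_subset_of_nonneg (erase_subset j S)
          fun _ _ _ => sq_nonneg _
    _ = (∑ j ∈ S, p j ^ 2) ^ 2 := by rw [sq, sum_mul_sum]; simp only [mul_pow]
    _ ≤ ((∑ j ∈ S, p j) ^ 2) ^ 2 :=
        pow_le_pow_left₀ (sum_nonneg fun _ _ => sq_nonneg _) (sum_sq_le_sq_sum_of_nonneg hp) 2
    _ = (∑ j ∈ S, p j) ^ 4 := by ring

theorem Finset.sq_sum_sum_erase_mul_le (S : Finset ι) {p : ι → R} (hp : ∀ j ∈ S, 0 ≤ p j)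
    (x : ι → ι → R) :
    (∑ j ∈ S, ∑ l ∈ S.erase j, p j * p l * x j l) ^ 2 ≤
      (∑ j ∈ S, p j) ^ 4 * ∑ j ∈ S, ∑ l ∈ S.erase j, x j l ^ 2 :=
  calc (∑ j ∈ S, ∑ l ∈ S.erase j, p j * p l * x j l) ^ 2
      ≤ (∑ j ∈ S, ∑ l ∈ S.erase j, (p j * p l) ^ 2) * ∑ j ∈ S, ∑ l ∈ S.erase j, x j l ^ 2 := by
        simpa only [sum_sigma'] using sum_mul_sq_le_sq_mul_sq (S.sigma fun j => S.erase j)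
          (fun jl => p jl.1 * p jl.2) (fun jl => x jl.1 jl.2)
    _ ≤ (∑ j ∈ S, p j) ^ 4 * ∑ j ∈ S, ∑ l ∈ S.erase j, x j l ^ 2 := by
        exact mul_le_mul_of_nonneg_right (sum_sum_erase_sq_mul_le S hp)
          (sum_nonneg fun _ _ => sum_nonneg fun _ _ => sq_nonneg _)

end OrderedRing

theorem Matrix.frobenius_norm_sum_sum_erase_smul_vecMulVec_sq_le {ι m n : Type*} [DecidableEq ι]
    [Fintype m] [Fintype n] (S : Finset ι) {p : ι → ℝ} (hp : ∀ j ∈ S, 0 ≤ p j)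
    (b : ι → EuclideanSpace ℝ m) (e : ι → ι → EuclideanSpace ℝ n) :
    ‖∑ j ∈ S, ∑ l ∈ S.erase j, (p j * p l) • vecMulVec (b j) (e j l)‖ ^ 2 ≤
      (∑ j ∈ S, p j) ^ 4 * ((∑ j ∈ S, ‖b j‖ ^ 2) * ∑ j ∈ S, ∑ l ∈ S.erase j, ‖e j l‖ ^ 2) := by
  have htri : ‖∑ j ∈ S, ∑ l ∈ S.erase j, (p j * p l) • vecMulVec (b j) (e j l)‖ ≤
      ∑ j ∈ S, ∑ l ∈ S.erase j, p j * p l * (‖b j‖ * ‖e j l‖) := by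
    refine (norm_sum_le _ _).trans (sum_le_sum fun j hj => (norm_sum_le _ _).trans_eq ?_)
    refine sum_congr rfl fun l hl => ?_
    rw [norm_smul, frobenius_norm_vecMulVec, Real.norm_of_nonneg
      (mul_nonneg (hp j hj) (hp l (mem_of_mem_erase hl)))]
  calc _ ≤ (∑ j ∈ S, ∑ l ∈ S.erase j, p j * p l * (‖b j‖ * ‖e j l‖)) ^ 2 := by gcongr
    _ ≤ (∑ j ∈ S, p j) ^ 4 * ∑ j ∈ S, ‖b j‖ ^ 2 * ∑ l ∈ S.erase j, ‖e j l‖ ^ 2 := by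
        simpa only [mul_pow, ← mul_sum] using sq_sum_sum_erase_mul_le S hp fun j l => ‖b j‖ * ‖e j l‖
    _ ≤ _ := by
        gcongr
        exact sum_mul_le_sum_mul_sum S (fun _ _ => sq_nonneg _)
          fun _ _ => sum_nonneg fun _ _ => sq_nonneg _

theorem sq_mul_le_one_of_le_one_div_sqrt {x K : ℝ} (hx : 0 ≤ x) (h : x ≤ 1 / √K) :
    x ^ 2 * K ≤ 1 := by
  rcases le_or_gt K 0 with hK | hK
  · nlinarith [sq_nonneg x]
  · calc x ^ 2 * K ≤ (1 / √K) ^ 2 * K := by gcongr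
      _ = 1 := by rw [div_pow, Real.sq_sqrt hK.le]; field_simp

theorem fusion_parameter_range_general
    {F : ℕ} {ι : Type*} [DecidableEq ι] (S : Finset ι) (d : ℕ)
    (hd2 : 2 ≤ d)
    {V W : Type*} [NormedAddCommGroup V] [InnerProductSpace ℝ V]
    [NormedAddCommGroup W] [InnerProductSpace ℝ W]
    (G : ℝ) (μ : ℝ)
    (g : EuclideanSpace ℝ (Fin F)) (hg : ‖g‖ ^ 2 ≤ G)
    (s : V) (hs : ‖s‖ ^ 2 ≤ 1)
    (p : ι → ℝ) (hp : ∀ j ∈ S, 0 < p j)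
    (b : ι → EuclideanSpace ℝ (Fin F))
    (c : ι → EuclideanSpace ℝ (Fin (2 * F)))
    (v : W)
    (hv : ‖v‖ ^ 2 = (1 - μ) ^ 2 * ‖g‖ ^ 2 * ‖s‖ ^ 2 *
      (∑ i : Fin F, ∑ k : Fin (2 * F),
        ((∑ j ∈ S, ∑ l ∈ S.erase j,
            (p j * p l) • (Matrix.of fun (i : Fin F) (k : Fin (2 * F)) => b j i * (c j - c l) k))
          i k) ^ 2) / (∑ m ∈ S, p m) ^ 4)
    (D : ℝ)
    (hD : D = (∑ j ∈ S, ‖b j‖ ^ 2) * (∑ j ∈ S, ∑ l ∈ S.erase j, ‖c j - c l‖ ^ 2))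
    (hμ1 : 1 - 1 / Real.sqrt ((d : ℝ) * ((d : ℝ) - 1) * D) ≤ μ) (hμ2 : μ ≤ 1) :
    ‖v‖ ^ 2 ≤ G := by
  have hD0 : 0 ≤ D := by rw [hD]; positivity
  have hG0 : 0 ≤ G := (sq_nonneg _).trans hg
  have hfrob : ∑ i, ∑ k, (∑ j ∈ S, ∑ l ∈ S.erase j,
      (p j * p l) • vecMulVec (b j) (c j - c l)) i k ^ 2 ≤ (∑ m ∈ S, p m) ^ 4 * D := by
    simpa only [← hD, frobenius_norm_sq_eq_sum, Real.norm_eq_abs, sq_abs] using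
      frobenius_norm_sum_sum_erase_smul_vecMulVec_sq_le S (fun j hj => (hp j hj).le) b
        fun j l => c j - c l
  have hμD : (1 - μ) ^ 2 * D ≤ 1 := by
    have hdd : (1 : ℝ) ≤ (d : ℝ) * ((d : ℝ) - 1) := by
      have : (2 : ℝ) ≤ d := by exact_mod_cast hd2
      nlinarith
    calc (1 - μ) ^ 2 * D ≤ (1 - μ) ^ 2 * ((d : ℝ) * ((d : ℝ) - 1) * D) := by
          gcongr
          exact le_mul_of_one_le_left hD0 hdd
      _ ≤ 1 := sq_mul_le_one_of_le_one_div_sqrt (by linarith) (by linarith)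
  rw [hv]
  calc _ ≤ (1 - μ) ^ 2 * ‖g‖ ^ 2 * ‖s‖ ^ 2 * D :=
        div_le_of_le_mul₀ (by positivity) (mul_nonneg (by positivity) hD0)
          ((mul_le_mul_of_nonneg_left hfrob (by positivity)).trans_eq (by ring))
    _ ≤ (1 - μ) ^ 2 * G * 1 * D := by gcongr
    _ = (1 - μ) ^ 2 * D * G := by ring
    _ ≤ G := mul_le_of_le_one_left hG0 hμD

/-- **Theorem 3 (range of the fusion parameter).** If the squared norm of the
attention-parameter gradient `v` has the product form coming from the graph-attention
aggregation, `‖g‖² ≤ G`, `‖s‖² ≤ 1`, and the fusion parameter satisfies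
`1 − 1/√(d(d−1)D) ≤ μ ≤ 1` with `D > 0` the non-i.i.d. measure, then `‖v‖² ≤ G`. -/
theorem fusion_parameter_range
    {F : ℕ} {ι : Type*} [DecidableEq ι] (S : Finset ι) (d : ℕ)
    (hd : S.card = d) (hd2 : 2 ≤ d)
    {V W : Type*} [NormedAddCommGroup V] [InnerProductSpace ℝ V]
    [NormedAddCommGroup W] [InnerProductSpace ℝ W]
    (G : ℝ) (hG : 0 < G) (μ : ℝ)
    (g : EuclideanSpace ℝ (Fin F)) (hg : ‖g‖ ^ 2 ≤ G)
    (s : V) (hs : ‖s‖ ^ 2 ≤ 1)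
    (p : ι → ℝ) (hp : ∀ j ∈ S, 0 < p j)
    (b : ι → EuclideanSpace ℝ (Fin F))
    (c : ι → EuclideanSpace ℝ (Fin (2 * F)))
    (v : W)
    (hv : ‖v‖ ^ 2 = (1 - μ) ^ 2 * ‖g‖ ^ 2 * ‖s‖ ^ 2 *
      (∑ i : Fin F, ∑ k : Fin (2 * F),
        ((∑ j ∈ S, ∑ l ∈ S.erase j,
            (p j * p l) • (Matrix.of fun (i : Fin F) (k : Fin (2 * F)) => b j i * (c j - c l) k))
          i k) ^ 2) / (∑ m ∈ S, p m) ^ 4)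
    (D : ℝ)
    (hD : D = (∑ j ∈ S, ‖b j‖ ^ 2) * (∑ j ∈ S, ∑ l ∈ S.erase j, ‖c j - c l‖ ^ 2))
    (hDpos : 0 < D)
    (hμ1 : 1 - 1 / Real.sqrt ((d : ℝ) * ((d : ℝ) - 1) * D) ≤ μ) (hμ2 : μ ≤ 1) :
    ‖v‖ ^ 2 ≤ G :=
  fusion_parameter_range_general S d hd2 G μ g hg s hs p hp b c v hv D hD hμ1 hμ2
end

section
/- If η < 1/(4TL), then for every 0 ≤ t ≤ T one has E[‖w_t − w_0‖²] ≤ 4Tη²χ² + 16T²η²·E[‖∇f(w_0)‖²]. -/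
/-!
Write `X t = w t - w 0`. Expanding `X (t + 1) = X t - η • g t` gives
`E‖X (t+1)‖² = E‖X t‖² - 2η E⟪X t, g t⟫ + η² E‖g t‖²`. As `X t` is `ℱ t`-measurable and conditional
expectation is the orthogonal projection of `L²` onto `ℱ t`-measurable functions, the cross term
equals `E⟪X t, ∇f(w t)⟫`, and smoothness gives `‖∇f(w t)‖ ≤ ‖∇f(w 0)‖ + L‖X t‖`. With
`4TηL ≤ 1` and Young's inequality this yields `E‖X (t+1)‖² ≤ (1 + 1/T) E‖X t‖² + C` with
`C = 2η²χ² + 4(T+1)η² E‖∇f(w 0)‖²`, hence `E‖X t‖² ≤ T((1 + 1/T)^t - 1) C ≤ 2TC`,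
because `(1 + 1/T)^T ≤ e < 3`.
-/

open MeasureTheory
open scoped RealInnerProductSpace

theorem discrete_gronwall_const {u : ℕ → ℝ} {r c : ℝ} (hr : 0 ≤ r) (h0 : u 0 = 0)
    (hstep : ∀ t, u (t + 1) ≤ (1 + r) * u t + c) (t : ℕ) : r * u t ≤ ((1 + r) ^ t - 1) * c := by
  induction t with
  | zero => simp [h0]
  | succ t ih =>
    calc r * u (t + 1) ≤ r * ((1 + r) * u t + c) := mul_le_mul_of_nonneg_left (hstep t) hr
      _ = (1 + r) * (r * u t) + r * c := by ring
      _ ≤ (1 + r) * (((1 + r) ^ t - 1) * c) + r * c := by gcongr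
      _ = ((1 + r) ^ (t + 1) - 1) * c := by ring

theorem LipschitzWith.memLp_comp {Ω E F : Type*} {mΩ : MeasurableSpace Ω} {μ : Measure Ω}
    [IsFiniteMeasure μ] [NormedAddCommGroup E] [NormedAddCommGroup F] {K} {p} {φ : E → F}
    (hφ : LipschitzWith K φ) {X : Ω → E} (hX : MemLp X p μ) : MemLp (fun ω => φ (X ω)) p μ := by
  have := (hφ.sub (LipschitzWith.const (φ 0))).comp_memLp (by simp) hX
  convert this.add (memLp_const (φ 0)) using 1
  ext ω
  simp

section InnerProductSpace

variable {E : Type*} [NormedAddCommGroup E] [InnerProductSpace ℝ E]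

theorem neg_two_mul_inner_add_sq_norm_le {T η L : ℝ} (hT : 1 ≤ T) (hη : 0 ≤ η) (hL : 0 ≤ L)
    (hηL : 4 * T * η * L ≤ 1) {x g v v₀ : E} (hv : ‖v - v₀‖ ≤ L * ‖x‖) :
    -(2 * η * ⟪x, v⟫) + η ^ 2 * ‖g‖ ^ 2 ≤
      ‖x‖ ^ 2 / T + 2 * η ^ 2 * ‖g - v‖ ^ 2 + (4 * T + 4) * η ^ 2 * ‖v₀‖ ^ 2 := by
  have hv_le : ‖v‖ ≤ ‖v₀‖ + L * ‖x‖ := by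
    linarith [norm_le_norm_add_norm_sub' v v₀]
  have h_inner : -⟪x, v⟫ ≤ ‖x‖ * (‖v₀‖ + L * ‖x‖) :=
    (neg_le_abs _).trans <| (abs_real_inner_le_norm x v).trans <|
      mul_le_mul_of_nonneg_left hv_le (norm_nonneg x)
  have hg_le : ‖g‖ ≤ ‖g - v‖ + (‖v₀‖ + L * ‖x‖) :=
    (norm_le_norm_sub_add g v).trans (by linarith)
  have hT0 : 0 < T := by linarith
  refine le_of_mul_le_mul_left ?_ hT0
  rw [mul_add T (_ + _), mul_add T (‖x‖ ^ 2 / T), mul_div_cancel₀ _ hT0.ne']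
  set r := ‖x‖
  set a := ‖v₀‖
  set n := ‖g - v‖
  have hr : 0 ≤ r := norm_nonneg x
  have ha : 0 ≤ a := norm_nonneg v₀
  have hn : 0 ≤ n := norm_nonneg _
  have h_cross : 2 * T * η * (-⟪x, v⟫) ≤ r ^ 2 / 4 + 4 * T ^ 2 * η ^ 2 * a ^ 2 + r ^ 2 / 2 := by
    nlinarith [mul_le_mul_of_nonneg_left h_inner (by positivity : 0 ≤ 2 * T * η),
      sq_nonneg (r / 2 - 2 * T * η * a), mul_le_mul_of_nonneg_right hηL (sq_nonneg r)]
  have h_sq : T * η ^ 2 * ‖g‖ ^ 2 ≤ 2 * T * η ^ 2 * n ^ 2 + 4 * T * η ^ 2 * a ^ 2 + r ^ 2 / 4 := by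
    have h16 : 16 * T * η ^ 2 * L ^ 2 ≤ 1 := by
      nlinarith [mul_le_mul hηL hηL (by positivity) zero_le_one]
    have hg2 : ‖g‖ ^ 2 ≤ 2 * n ^ 2 + 4 * a ^ 2 + 4 * L ^ 2 * r ^ 2 := by
      nlinarith [pow_le_pow_left₀ (norm_nonneg g) hg_le 2, sq_nonneg (n - a - L * r),
        sq_nonneg (a - L * r)]
    nlinarith [mul_le_mul_of_nonneg_left hg2 (by positivity : 0 ≤ T * η ^ 2),
      mul_le_mul_of_nonneg_right h16 (sq_nonneg r)]
  linarith

variable {Ω : Type*} {m mΩ : MeasurableSpace Ω} {μ : Measure Ω}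

theorem MeasureTheory.MemLp.integrable_inner {X Y : Ω → E} (hX : MemLp X 2 μ)
    (hY : MemLp Y 2 μ) : Integrable (fun ω => ⟪X ω, Y ω⟫) μ :=
  (L2.integrable_inner (𝕜 := ℝ) (hX.toLp X) (hY.toLp Y)).congr <| by
    filter_upwards [hX.coeFn_toLp, hY.coeFn_toLp] with ω hXω hYω
    rw [hXω, hYω]

theorem integral_norm_sub_smul_sq {X Y : Ω → E} (hX : MemLp X 2 μ) (hY : MemLp Y 2 μ) (c : ℝ) :
    ∫ ω, ‖X ω - c • Y ω‖ ^ 2 ∂μ =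
      ∫ ω, ‖X ω‖ ^ 2 ∂μ - 2 * c * ∫ ω, ⟪X ω, Y ω⟫ ∂μ + c ^ 2 * ∫ ω, ‖Y ω‖ ^ 2 ∂μ := by
  have hX2 := hX.integrable_norm_pow two_ne_zero
  have hXY := (hX.integrable_inner hY).const_mul (2 * c)
  have hXXY : Integrable (fun ω => ‖X ω‖ ^ 2 - 2 * c * ⟪X ω, Y ω⟫) μ := hX2.sub hXY
  calc ∫ ω, ‖X ω - c • Y ω‖ ^ 2 ∂μ
      = ∫ ω, (‖X ω‖ ^ 2 - 2 * c * ⟪X ω, Y ω⟫ + c ^ 2 * ‖Y ω‖ ^ 2) ∂μ := by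
        congr 1 with ω
        rw [norm_sub_sq_real, real_inner_smul_right, norm_smul, mul_pow, Real.norm_eq_abs,
          sq_abs]
        ring
    _ = _ := by
        rw [integral_add hXXY ((hY.integrable_norm_pow two_ne_zero).const_mul _),
          integral_sub hX2 hXY, integral_const_mul, integral_const_mul]

theorem integral_inner_condExp [CompleteSpace E] [IsFiniteMeasure μ] (hm : m ≤ mΩ)
    {X Y : Ω → E} (hXm : AEStronglyMeasurable[m] X μ) (hX : MemLp X 2 μ) (hY : MemLp Y 2 μ) :
    ∫ ω, ⟪X ω, (μ[Y | m]) ω⟫ ∂μ = ∫ ω, ⟪X ω, Y ω⟫ ∂μ := by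
  have h := inner_condExpL2_eq_inner_fun (𝕜 := ℝ) hm (hY.toLp Y) (hX.toLp X)
    (hXm.congr hX.coeFn_toLp.symm)
  rw [L2.inner_def, L2.inner_def] at h
  convert h using 1 <;> refine integral_congr_ae ?_
  · filter_upwards [hX.coeFn_toLp, hY.condExpL2_ae_eq_condExp (𝕜 := ℝ) hm] with ω hXω hYω
    rw [hXω, hYω, real_inner_comm]
  · filter_upwards [hX.coeFn_toLp, hY.coeFn_toLp] with ω hXω hYω
    rw [hXω, hYω, real_inner_comm]

theorem integral_sgd_drift_step_le [CompleteSpace E] [IsFiniteMeasure μ] (hm : m ≤ mΩ)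
    {T η L χ : ℝ} (hT : 1 ≤ T) (hη : 0 ≤ η) (hL : 0 ≤ L) (hηL : 4 * T * η * L ≤ 1)
    {X G V V₀ : Ω → E} (hXm : AEStronglyMeasurable[m] X μ) (hX : MemLp X 2 μ)
    (hG : MemLp G 2 μ) (hV : MemLp V 2 μ) (hV₀ : MemLp V₀ 2 μ) (hcond : μ[G | m] =ᵐ[μ] V)
    (hlip : ∀ ω, ‖V ω - V₀ ω‖ ≤ L * ‖X ω‖) (hvar : ∫ ω, ‖G ω - V ω‖ ^ 2 ∂μ ≤ χ ^ 2) :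
    ∫ ω, ‖X ω - η • G ω‖ ^ 2 ∂μ ≤
      (1 + T⁻¹) * ∫ ω, ‖X ω‖ ^ 2 ∂μ + 2 * η ^ 2 * χ ^ 2
        + (4 * T + 4) * η ^ 2 * ∫ ω, ‖V₀ ω‖ ^ 2 ∂μ := by
  have h_cross : ∫ ω, ⟪X ω, G ω⟫ ∂μ = ∫ ω, ⟪X ω, V ω⟫ ∂μ := by
    rw [← integral_inner_condExp hm hXm hX hG]
    refine integral_congr_ae ?_
    filter_upwards [hcond] with ω hω
    rw [hω]
  have hX2 := hX.integrable_norm_pow two_ne_zero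
  have hG2 := hG.integrable_norm_pow two_ne_zero
  have hN2 : Integrable (fun ω => ‖G ω - V ω‖ ^ 2) μ :=
    (hG.sub hV).integrable_norm_pow two_ne_zero
  have hV₀2 := hV₀.integrable_norm_pow two_ne_zero
  have hXV : Integrable (fun ω => -(2 * η * ⟪X ω, V ω⟫)) μ :=
    ((hX.integrable_inner hV).const_mul _).neg
  have h_lhs : Integrable (fun ω => -(2 * η * ⟪X ω, V ω⟫) + η ^ 2 * ‖G ω‖ ^ 2) μ :=
    hXV.add (hG2.const_mul _)
  have h_rhs₁ : Integrable (fun ω => ‖X ω‖ ^ 2 / T + 2 * η ^ 2 * ‖G ω - V ω‖ ^ 2) μ :=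
    (hX2.div_const T).add (hN2.const_mul _)
  have h_rhs : Integrable (fun ω => ‖X ω‖ ^ 2 / T + 2 * η ^ 2 * ‖G ω - V ω‖ ^ 2
      + (4 * T + 4) * η ^ 2 * ‖V₀ ω‖ ^ 2) μ :=
    h_rhs₁.add (hV₀2.const_mul _)
  calc ∫ ω, ‖X ω - η • G ω‖ ^ 2 ∂μ
      = ∫ ω, ‖X ω‖ ^ 2 ∂μ + ∫ ω, (-(2 * η * ⟪X ω, V ω⟫) + η ^ 2 * ‖G ω‖ ^ 2) ∂μ := by
        rw [integral_norm_sub_smul_sq hX hG, h_cross, integral_add hXV (hG2.const_mul _),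
          integral_neg, integral_const_mul, integral_const_mul]
        ring
    _ ≤ ∫ ω, ‖X ω‖ ^ 2 ∂μ + ∫ ω, (‖X ω‖ ^ 2 / T + 2 * η ^ 2 * ‖G ω - V ω‖ ^ 2
          + (4 * T + 4) * η ^ 2 * ‖V₀ ω‖ ^ 2) ∂μ :=
        add_le_add le_rfl (integral_mono h_lhs h_rhs fun ω =>
          neg_two_mul_inner_add_sq_norm_le hT hη hL hηL (hlip ω))
    _ = (1 + T⁻¹) * ∫ ω, ‖X ω‖ ^ 2 ∂μ + 2 * η ^ 2 * ∫ ω, ‖G ω - V ω‖ ^ 2 ∂μ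
          + (4 * T + 4) * η ^ 2 * ∫ ω, ‖V₀ ω‖ ^ 2 ∂μ := by
        rw [integral_add h_rhs₁ (hV₀2.const_mul _),
          integral_add (hX2.div_const T) (hN2.const_mul _), integral_div, integral_const_mul,
          integral_const_mul]
        ring
    _ ≤ _ := by gcongr

end InnerProductSpace

theorem gatta_lemma2_general
    {E : Type*} [NormedAddCommGroup E] [InnerProductSpace ℝ E] [FiniteDimensional ℝ E]
    {Ω : Type*} {mΩ : MeasurableSpace Ω} {μ : Measure Ω} [IsProbabilityMeasure μ]
    (ℱ : Filtration ℕ mΩ)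
    (f : E → ℝ) (L : ℝ) (hL : 0 < L)
    (hsmooth : ∀ x y : E, ‖gradient f x - gradient f y‖ ≤ L * ‖x - y‖)
    (T : ℕ) (hT : 1 ≤ T) (η : ℝ) (hη : 0 < η) (χ : ℝ)
    (w g : ℕ → Ω → E)
    (hupd : ∀ t, w (t + 1) = fun ω => w t ω - η • g t ω)
    (hw_meas : ∀ t, StronglyMeasurable[ℱ t] (w t))
    (hw_L2 : ∀ t, MemLp (w t) 2 μ)
    (hg_L2 : ∀ t, MemLp (g t) 2 μ)
    (h_unbiased : ∀ t, μ[g t | ℱ t] =ᵐ[μ] fun ω => gradient f (w t ω))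
    (h_var : ∀ t, ∫ ω, ‖g t ω - gradient f (w t ω)‖ ^ 2 ∂μ ≤ χ ^ 2)
    (hη_small : η < 1 / (4 * T * L)) :
    ∀ t ≤ T, ∫ ω, ‖w t ω - w 0 ω‖ ^ 2 ∂μ
      ≤ 4 * T * η ^ 2 * χ ^ 2 + 16 * T ^ 2 * η ^ 2 * ∫ ω, ‖gradient f (w 0 ω)‖ ^ 2 ∂μ := by
  intro t ht
  have hT₁ : (1 : ℝ) ≤ T := by exact_mod_cast hT
  have hηL : 4 * T * η * L ≤ 1 := by
    rw [lt_div_iff₀ (by positivity)] at hη_small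
    linarith
  have h_grad : ∀ s, MemLp (fun ω => gradient f (w s ω)) 2 μ := fun s =>
    (lipschitzWith_iff_norm_sub_le (C := ⟨L, hL.le⟩).2 hsmooth).memLp_comp (hw_L2 s)
  set G := ∫ ω, ‖gradient f (w 0 ω)‖ ^ 2 ∂μ
  set C := 2 * η ^ 2 * χ ^ 2 + (4 * T + 4) * η ^ 2 * G
  have h_step : ∀ s, ∫ ω, ‖w (s + 1) ω - w 0 ω‖ ^ 2 ∂μ
      ≤ (1 + (T : ℝ)⁻¹) * ∫ ω, ‖w s ω - w 0 ω‖ ^ 2 ∂μ + C := fun s => by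
    simp only [hupd s, sub_right_comm _ (η • _)]
    refine (integral_sgd_drift_step_le (X := fun ω => w s ω - w 0 ω) (ℱ.le s) hT₁ hη.le hL.le
      hηL ((hw_meas s).sub ((hw_meas 0).mono (ℱ.mono s.zero_le))).aestronglyMeasurable
      ((hw_L2 s).sub (hw_L2 0)) (hg_L2 s) (h_grad s) (h_grad 0) (h_unbiased s)
      (fun ω => hsmooth _ _) (h_var s)).trans_eq (add_assoc _ _ _)
  have h_rec := discrete_gronwall_const (u := fun s => ∫ ω, ‖w s ω - w 0 ω‖ ^ 2 ∂μ)
    (by positivity) (by simp) h_step t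
  have h_pow : (1 + (T : ℝ)⁻¹) ^ t ≤ 3 :=
    (pow_le_pow_right₀ (le_add_of_nonneg_right (by positivity)) ht).trans <|
      Real.one_add_inv_pow_le_exp.trans <| Real.exp_one_lt_d9.le.trans (by norm_num)
  have hG : 0 ≤ G := integral_nonneg fun ω => by positivity
  have hC : 0 ≤ C := by positivity
  calc ∫ ω, ‖w t ω - w 0 ω‖ ^ 2 ∂μ
      = T * ((T : ℝ)⁻¹ * ∫ ω, ‖w t ω - w 0 ω‖ ^ 2 ∂μ) := by field_simp
    _ ≤ T * (2 * C) := mul_le_mul_of_nonneg_left (by nlinarith) (by positivity)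
    _ ≤ _ := by nlinarith [mul_nonneg (mul_nonneg (sub_nonneg.2 hT₁) (sq_nonneg η)) hG]

/-- **Lemma 2 (GATTA).** For a stochastic-gradient trajectory with step size `η < 1/(4TL)`,
the expected squared drift of the iterates from the starting point is bounded by
`4Tη²χ² + 16T²η²·E[‖∇f(w₀)‖²]`. -/
theorem gatta_lemma2
    {E : Type*} [NormedAddCommGroup E] [InnerProductSpace ℝ E] [FiniteDimensional ℝ E]
    {Ω : Type*} {mΩ : MeasurableSpace Ω} {μ : Measure Ω} [IsProbabilityMeasure μ]
    (ℱ : Filtration ℕ mΩ)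
    (f : E → ℝ) (L : ℝ) (hL : 0 < L)
    (hdiff : Differentiable ℝ f)
    (hsmooth : ∀ x y : E, ‖gradient f x - gradient f y‖ ≤ L * ‖x - y‖)
    (T : ℕ) (hT : 1 ≤ T) (η : ℝ) (hη : 0 < η) (χ : ℝ) (hχ : 0 ≤ χ)
    (w g : ℕ → Ω → E)
    (hupd : ∀ t, w (t + 1) = fun ω => w t ω - η • g t ω)
    (hw_meas : ∀ t, StronglyMeasurable[ℱ t] (w t))
    (hg_meas : ∀ t, StronglyMeasurable[ℱ (t + 1)] (g t))
    (hw_L2 : ∀ t, MemLp (w t) 2 μ)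
    (hg_L2 : ∀ t, MemLp (g t) 2 μ)
    (h_unbiased : ∀ t, μ[g t | ℱ t] =ᵐ[μ] fun ω => gradient f (w t ω))
    (h_var : ∀ t, ∫ ω, ‖g t ω - gradient f (w t ω)‖ ^ 2 ∂μ ≤ χ ^ 2)
    (hη_small : η < 1 / (4 * T * L)) :
    ∀ t ≤ T, ∫ ω, ‖w t ω - w 0 ω‖ ^ 2 ∂μ
      ≤ 4 * T * η ^ 2 * χ ^ 2 + 16 * T ^ 2 * η ^ 2 * ∫ ω, ‖gradient f (w 0 ω)‖ ^ 2 ∂μ :=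
  gatta_lemma2_general ℱ f L hL hsmooth T hT η hη χ w g hupd hw_meas hw_L2 hg_L2 h_unbiased h_var
    hη_small
end

section
/- Let Ã be an N×N real matrix with Ã·𝟙_N = 𝟙_N and 𝟙_Nᵀ·Ã = 𝟙_Nᵀ (doubly stochastic), and set Q := (1/N)·𝟙_N·𝟙_Nᵀ. Let W^{(0)} = w·𝟙_Nᵀ for some w ∈ ℝ^d (identical columns), let Ξ^{(0)}, Ξ^{(1)}, … be d×N real matrices, let η ∈ ℝ, and define W^{(k)} := (W^{(k−1)} − η·Ξ^{(k−1)})·Ã for k ≥ 1. Then for every k ≥ 1: W^{(k)}·(I_N − Q) = −η·Σ_{s=0}^{k−1} Ξ^{(s)}·(Ã^{k−s} − Q). -/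
/-!
Unrolling the recursion gives `W⁽ᵏ⁾ = W⁽⁰⁾Ãᵏ − η Σ_{s<k} Ξ⁽ˢ⁾Ãᵏ⁻ˢ`. Unit column sums make
`W⁽⁰⁾Ã = W⁽⁰⁾`, and `W⁽⁰⁾Q = W⁽⁰⁾` since its columns agree, so the first term is killed by
`I − Q`; unit row sums make `ÃʲQ = Q`, which turns each `Ξ⁽ˢ⁾Ãᵏ⁻ˢ(I − Q)` into `Ξ⁽ˢ⁾(Ãᵏ⁻ˢ − Q)`.
-/

open Matrix Finset

namespace Matrix

variable {m n R : Type*} [Fintype n] [DecidableEq n]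

theorem eq_mul_pow_sub_sum_of_succ_eq [CommRing R] (A : Matrix n n R)
    (Ξ W : ℕ → Matrix m n R) (η : R) (hrec : ∀ k, W (k + 1) = (W k - η • Ξ k) * A) (k : ℕ) :
    W k = W 0 * A ^ k - η • ∑ s ∈ range k, Ξ s * A ^ (k - s) := by
  induction k with
  | zero => simp
  | succ k ih =>
    have hshift : ∀ s ∈ range k, Ξ s * A ^ (k - s) * A = Ξ s * A ^ (k + 1 - s) := fun s hs => by
      rw [Matrix.mul_assoc, ← pow_succ, Nat.sub_add_comm (mem_range.mp hs).le]
    rw [hrec, ih, sum_range_succ, Nat.add_sub_cancel_left, pow_one, ← sum_congr rfl hshift,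
      ← Matrix.sum_mul, pow_succ]
    simp only [Matrix.sub_mul, Matrix.smul_mul, Matrix.mul_assoc, smul_add]
    abel

omit [DecidableEq n] in
theorem mul_of_const_eq_of_mulVec_one [NonAssocSemiring R] {A : Matrix n n R}
    (hrow : A *ᵥ 1 = 1) (c : R) :
    A * of (fun _ _ => c) = of fun (_ : n) (_ : n) => c := by
  ext i j
  simpa [mul_apply, mulVec, dotProduct, ← sum_mul] using congrArg (· * c) (congrFun hrow i)

theorem pow_mul_of_const_eq_of_mulVec_one [Semiring R] {A : Matrix n n R}
    (hrow : A *ᵥ 1 = 1) (c : R) (j : ℕ) :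
    A ^ j * of (fun _ _ => c) = of fun (_ : n) (_ : n) => c := by
  induction j with
  | zero => simp
  | succ j ih => rw [pow_succ, Matrix.mul_assoc, mul_of_const_eq_of_mulVec_one hrow, ih]

omit [DecidableEq n] in
theorem replicateCol_mul_eq_of_vecMul_one [NonAssocSemiring R] {A : Matrix n n R}
    (hcol : 1 ᵥ* A = 1) (w : m → R) :
    replicateCol n w * A = replicateCol n w := by
  ext i j
  simpa [mul_apply, vecMul, dotProduct, ← mul_sum] using congrArg (w i * ·) (congrFun hcol j)

theorem replicateCol_mul_pow_eq_of_vecMul_one [Semiring R] {A : Matrix n n R}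
    (hcol : 1 ᵥ* A = 1) (w : m → R) (j : ℕ) :
    replicateCol n w * A ^ j = replicateCol n w := by
  induction j with
  | zero => simp
  | succ j ih => rw [pow_succ, ← Matrix.mul_assoc, ih, replicateCol_mul_eq_of_vecMul_one hcol]

omit [DecidableEq n] in
theorem replicateCol_mul_of_inv_card [DivisionRing R] [CharZero R] (w : m → R) :
    replicateCol n w * of (fun (_ : n) (_ : n) => (Fintype.card n : R)⁻¹) = replicateCol n w := by
  ext i j
  have hcard : (Fintype.card n : R) ≠ 0 := Nat.cast_ne_zero.mpr (Fintype.card_pos_iff.mpr ⟨j⟩).ne'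
  simp only [Matrix.mul_apply, replicateCol_apply, of_apply, ← Finset.mul_sum, sum_const,
    card_univ, nsmul_eq_mul, mul_inv_cancel₀ hcard, mul_one]

end Matrix

/-- **Residual error decomposition (Lemma 2 of Li et al., adapted).** If all columns of
`W⁽⁰⁾` are equal and `W⁽ᵏ⁾ = (W⁽ᵏ⁻¹⁾ − η·Ξ⁽ᵏ⁻¹⁾)·Ã` with `Ã` doubly stochastic, then with
`Q = (1/N)·𝟙𝟙ᵀ` one has `W⁽ᵏ⁾·(I − Q) = −η·Σ_{s=0}^{k−1} Ξ⁽ˢ⁾·(Ãᵏ⁻ˢ − Q)` for all `k ≥ 1`. -/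
theorem residual_error_decomposition
    {d N : ℕ}
    (A : Matrix (Fin N) (Fin N) ℝ)
    (hrow : A.mulVec 1 = 1) (hcol : Matrix.vecMul 1 A = 1)
    (w : Fin d → ℝ) (Ξ : ℕ → Matrix (Fin d) (Fin N) ℝ) (η : ℝ)
    (W : ℕ → Matrix (Fin d) (Fin N) ℝ)
    (hW0 : W 0 = Matrix.of fun i _ => w i)
    (hrec : ∀ k : ℕ, W (k + 1) = (W k - η • Ξ k) * A) :
    ∀ k : ℕ, 1 ≤ k →
      W k * ((1 : Matrix (Fin N) (Fin N) ℝ) - Matrix.of fun _ _ => (N : ℝ)⁻¹)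
        = (-η) • ∑ s ∈ Finset.range k,
            Ξ s * (A ^ (k - s) - Matrix.of fun _ _ => (N : ℝ)⁻¹) := by
  rintro k -
  replace hW0 : W 0 = replicateCol (Fin N) w := hW0
  have hW0A : W 0 * A ^ k = W 0 := hW0 ▸ replicateCol_mul_pow_eq_of_vecMul_one hcol w k
  have hW0Q : W 0 * of (fun (_ : Fin N) (_ : Fin N) => (N : ℝ)⁻¹) = W 0 := by
    simpa [hW0] using replicateCol_mul_of_inv_card (n := Fin N) w
  rw [eq_mul_pow_sub_sum_of_succ_eq A Ξ W η hrec k, Matrix.sub_mul, hW0A, Matrix.mul_sub,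
    Matrix.mul_one, hW0Q, sub_self, zero_sub, Matrix.smul_mul, Matrix.sum_mul, neg_smul]
  simp only [Matrix.mul_assoc, Matrix.mul_sub, Matrix.mul_one,
    pow_mul_of_const_eq_of_mulVec_one hrow]
end

section
/- Suppose that for every w ∈ E: (1/N)·Σ_{i=1}^N ‖∇f_i(w) − (1/N)·Σ_{j=1}^N ∇f_j(w)‖² ≤ κ². Then for all points w_1, …, w_N ∈ E with w̄ := (1/N)·Σ_{i=1}^N w_i: (1/N)·Σ_{i=1}^N ‖∇f_i(w_i)‖² ≤ (8L²/N)·Σ_{i=1}^N ‖w_i − w̄‖² + 4κ² + 4·‖(1/N)·Σ_{i=1}^N ∇f_i(w_i)‖². -/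
/-!
Write `gᵢ = ∇fᵢ(wᵢ)` and `hᵢ = ∇fᵢ(w̄)`, with means `ḡ` and `h̄`. Splitting
`gᵢ = (gᵢ - hᵢ) + (hᵢ - h̄) + (h̄ - ḡ) + ḡ` and using `‖a + b + c + d‖² ≤ 4 (‖a‖² + ⋯ + ‖d‖²)`,
the mean of `‖gᵢ‖²` is at most four times the mean of `‖gᵢ - hᵢ‖²`, the heterogeneity at `w̄`,
`‖h̄ - ḡ‖²` and `‖ḡ‖²`. By Jensen, `‖h̄ - ḡ‖²` is again at most the mean of `‖gᵢ - hᵢ‖²`,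
whence the factor `8`, and smoothness bounds `‖gᵢ - hᵢ‖` by `L ‖wᵢ - w̄‖`.
-/

open Finset

theorem inv_natCast_mul_natCast_mul_le (N : ℕ) {c : ℝ} (hc : 0 ≤ c) :
    (N : ℝ)⁻¹ * (N * c) ≤ c := by
  rcases N.eq_zero_or_pos with rfl | hN
  · simpa using hc
  · rw [inv_mul_cancel_left₀ (Nat.cast_ne_zero.mpr hN.ne')]

section Averages

variable {E : Type*} [SeminormedAddCommGroup E]

theorem norm_sum_sq_le_card_mul_sum_norm_sq {ι : Type*} (s : Finset ι) (v : ι → E) :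
    ‖∑ i ∈ s, v i‖ ^ 2 ≤ #s * ∑ i ∈ s, ‖v i‖ ^ 2 :=
  (pow_le_pow_left₀ (norm_nonneg _) (norm_sum_le s v) 2).trans sq_sum_le_card_mul_sum_sq

theorem norm_add_add_add_sq_le (a b c d : E) :
    ‖a + b + c + d‖ ^ 2 ≤ 4 * (‖a‖ ^ 2 + ‖b‖ ^ 2 + ‖c‖ ^ 2 + ‖d‖ ^ 2) := by
  simpa [Fin.sum_univ_four, add_assoc] using
    norm_sum_sq_le_card_mul_sum_norm_sq univ ![a, b, c, d]

theorem mean_norm_sub_sq_le_of_lipschitz {F : Type*} [SeminormedAddCommGroup F] {N : ℕ}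
    (φ : Fin N → E → F) {L : ℝ} (hφ : ∀ i, ∀ x y, ‖φ i x - φ i y‖ ≤ L * ‖x - y‖)
    (w : Fin N → E) (z : E) :
    (N : ℝ)⁻¹ * ∑ i, ‖φ i (w i) - φ i z‖ ^ 2 ≤ L ^ 2 * ((N : ℝ)⁻¹ * ∑ i, ‖w i - z‖ ^ 2) := by
  rw [mul_left_comm (L ^ 2), mul_sum (s := univ) (a := L ^ 2)]
  gcongr with i
  rw [← mul_pow]
  exact pow_le_pow_left₀ (norm_nonneg _) (hφ i _ _) 2

variable [NormedSpace ℝ E]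

theorem norm_inv_smul_sum_sq_le {N : ℕ} (v : Fin N → E) :
    ‖(N : ℝ)⁻¹ • ∑ i, v i‖ ^ 2 ≤ (N : ℝ)⁻¹ * ∑ i, ‖v i‖ ^ 2 := by
  have hsum := norm_sum_sq_le_card_mul_sum_norm_sq univ v
  rw [card_univ, Fintype.card_fin] at hsum
  calc ‖(N : ℝ)⁻¹ • ∑ i, v i‖ ^ 2 = (N : ℝ)⁻¹ * ((N : ℝ)⁻¹ * ‖∑ i, v i‖ ^ 2) := by
        rw [norm_smul, norm_inv, Real.norm_natCast]; ring
    _ ≤ (N : ℝ)⁻¹ * ((N : ℝ)⁻¹ * (N * ∑ i, ‖v i‖ ^ 2)) := by gcongr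
    _ ≤ (N : ℝ)⁻¹ * ∑ i, ‖v i‖ ^ 2 := by
        gcongr
        exact inv_natCast_mul_natCast_mul_le N (sum_nonneg fun i _ ↦ sq_nonneg ‖v i‖)

theorem mean_norm_sq_le_mean_norm_sub_sq_add_variance {N : ℕ} (g h : Fin N → E) :
    (N : ℝ)⁻¹ * ∑ i, ‖g i‖ ^ 2
      ≤ 8 * ((N : ℝ)⁻¹ * ∑ i, ‖g i - h i‖ ^ 2)
        + 4 * ((N : ℝ)⁻¹ * ∑ i, ‖h i - (N : ℝ)⁻¹ • ∑ j, h j‖ ^ 2)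
        + 4 * ‖(N : ℝ)⁻¹ • ∑ i, g i‖ ^ 2 := by
  set gbar := (N : ℝ)⁻¹ • ∑ i, g i
  set hbar := (N : ℝ)⁻¹ • ∑ i, h i
  have hjensen : ‖hbar - gbar‖ ^ 2 ≤ (N : ℝ)⁻¹ * ∑ i, ‖g i - h i‖ ^ 2 := by
    simpa only [smul_sub, sum_sub_distrib, norm_sub_rev (h _)] using
      norm_inv_smul_sum_sq_le (fun i ↦ h i - g i)
  have hsplit : ∀ i, ‖g i‖ ^ 2 ≤
      4 * ‖g i - h i‖ ^ 2 + 4 * ‖h i - hbar‖ ^ 2 + 4 * (‖hbar - gbar‖ ^ 2 + ‖gbar‖ ^ 2) := by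
    intro i
    have h4 := norm_add_add_add_sq_le (g i - h i) (h i - hbar) (hbar - gbar) gbar
    rw [sub_add_sub_cancel, sub_add_sub_cancel, sub_add_cancel] at h4
    linarith
  have hconst := inv_natCast_mul_natCast_mul_le N
    (by positivity : 0 ≤ 4 * (‖hbar - gbar‖ ^ 2 + ‖gbar‖ ^ 2))
  calc (N : ℝ)⁻¹ * ∑ i, ‖g i‖ ^ 2
      ≤ (N : ℝ)⁻¹ * ∑ i, (4 * ‖g i - h i‖ ^ 2 + 4 * ‖h i - hbar‖ ^ 2
          + 4 * (‖hbar - gbar‖ ^ 2 + ‖gbar‖ ^ 2)) := by gcongr with i; exact hsplit i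
    _ = 4 * ((N : ℝ)⁻¹ * ∑ i, ‖g i - h i‖ ^ 2) + 4 * ((N : ℝ)⁻¹ * ∑ i, ‖h i - hbar‖ ^ 2)
          + (N : ℝ)⁻¹ * (N * (4 * (‖hbar - gbar‖ ^ 2 + ‖gbar‖ ^ 2))) := by
        simp only [sum_add_distrib, ← mul_sum, sum_const, card_univ, Fintype.card_fin,
          nsmul_eq_mul]
        ring
    _ ≤ _ := by linarith

end Averages

theorem gradient_second_moment_bound_general
    {E : Type*} [NormedAddCommGroup E] [InnerProductSpace ℝ E] [CompleteSpace E]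
    {N : ℕ}
    (f : Fin N → E → ℝ) (L : ℝ) (κ : ℝ)
    (hsmooth : ∀ i, ∀ x y : E, ‖gradient (f i) x - gradient (f i) y‖ ≤ L * ‖x - y‖)
    (hhet : ∀ w : E,
      (N : ℝ)⁻¹ * ∑ i, ‖gradient (f i) w - (N : ℝ)⁻¹ • ∑ j, gradient (f j) w‖ ^ 2 ≤ κ ^ 2)
    (w : Fin N → E) :
    (N : ℝ)⁻¹ * ∑ i, ‖gradient (f i) (w i)‖ ^ 2
      ≤ 8 * L ^ 2 / N * ∑ i, ‖w i - (N : ℝ)⁻¹ • ∑ j, w j‖ ^ 2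
        + 4 * κ ^ 2 + 4 * ‖(N : ℝ)⁻¹ • ∑ i, gradient (f i) (w i)‖ ^ 2 := by
  set wbar := (N : ℝ)⁻¹ • ∑ j, w j
  calc (N : ℝ)⁻¹ * ∑ i, ‖gradient (f i) (w i)‖ ^ 2
      ≤ 8 * ((N : ℝ)⁻¹ * ∑ i, ‖gradient (f i) (w i) - gradient (f i) wbar‖ ^ 2)
        + 4 * ((N : ℝ)⁻¹ * ∑ i,
          ‖gradient (f i) wbar - (N : ℝ)⁻¹ • ∑ j, gradient (f j) wbar‖ ^ 2)
        + 4 * ‖(N : ℝ)⁻¹ • ∑ i, gradient (f i) (w i)‖ ^ 2 :=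
        mean_norm_sq_le_mean_norm_sub_sq_add_variance _ _
    _ ≤ 8 * (L ^ 2 * ((N : ℝ)⁻¹ * ∑ i, ‖w i - wbar‖ ^ 2)) + 4 * κ ^ 2
        + 4 * ‖(N : ℝ)⁻¹ • ∑ i, gradient (f i) (w i)‖ ^ 2 := by
        gcongr 8 * ?_ + 4 * ?_ + _
        exacts [mean_norm_sub_sq_le_of_lipschitz (fun i ↦ gradient (f i)) hsmooth w wbar,
          hhet wbar]
    _ = _ := by ring

/-- **Bound on second moments of gradients (Lemma 4 of Li et al.).** If the local `L`-smooth
objectives have heterogeneity at most `κ²`, then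
`(1/N)Σᵢ‖∇fᵢ(wᵢ)‖² ≤ (8L²/N)Σᵢ‖wᵢ − w̄‖² + 4κ² + 4‖(1/N)Σᵢ∇fᵢ(wᵢ)‖²`,
where `w̄` is the average of the `wᵢ`. -/
theorem gradient_second_moment_bound
    {E : Type*} [NormedAddCommGroup E] [InnerProductSpace ℝ E] [CompleteSpace E]
    {N : ℕ} (hN : 0 < N)
    (f : Fin N → E → ℝ) (L : ℝ) (hL : 0 < L) (κ : ℝ) (hκ : 0 ≤ κ)
    (hdiff : ∀ i, Differentiable ℝ (f i))
    (hsmooth : ∀ i, ∀ x y : E, ‖gradient (f i) x - gradient (f i) y‖ ≤ L * ‖x - y‖)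
    (hhet : ∀ w : E,
      (N : ℝ)⁻¹ * ∑ i, ‖gradient (f i) w - (N : ℝ)⁻¹ • ∑ j, gradient (f j) w‖ ^ 2 ≤ κ ^ 2)
    (w : Fin N → E) :
    (N : ℝ)⁻¹ * ∑ i, ‖gradient (f i) (w i)‖ ^ 2
      ≤ 8 * L ^ 2 / N * ∑ i, ‖w i - (N : ℝ)⁻¹ • ∑ j, w j‖ ^ 2
        + 4 * κ ^ 2 + 4 * ‖(N : ℝ)⁻¹ • ∑ i, gradient (f i) (w i)‖ ^ 2 :=
  gradient_second_moment_bound_general f L κ hsmooth hhet w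
end

section
/- Assume η ≤ 1/(24TL). Then Σ_{i=1}^N E[‖Σ_{t=0}^{T−1} ∇f_i(w_{i,t})‖²] ≤ 3T²·Σ_{i=1}^N E[‖∇f_i(w_i)‖²] + 8·T³·η²·χ²·L²·N. -/
/-!
Work in `L²(μ; E)`. Write `G t` for `∇f(w t)` and `ξ t = g t - G t` for the gradient noise.
Smoothness and the update rule give `‖G t - G 0‖ ≤ Lη ‖∑_{s<t} (G s + ξ s)‖`. The noises are
martingale increments, hence orthogonal, so `‖∑_{s<t} ξ s‖² ≤ Tχ²` for `t ≤ T`. A discrete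
Grönwall argument then bounds every `‖G t‖` by `(‖G 0‖ + Lη√T χ)(1 + Lη)^T`, which is at most
`24/23 (‖G 0‖ + Lη√T χ)` because `TLη ≤ 1/24`; summing over `t`, squaring and summing over the
nodes gives the bound.
-/

open MeasureTheory Finset
open scoped RealInnerProductSpace

namespace MeasureTheory

variable {Ω E : Type*} {m mΩ : MeasurableSpace Ω} {μ : Measure Ω} [NormedAddCommGroup E]

theorem MemLp.toLp_finsetSum {ι : Type*} {p : ENNReal} (s : Finset ι)
    {f : ι → Ω → E} (hf : ∀ i, MemLp (f i) p μ) :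
    (memLp_finsetSum' s fun i _ ↦ hf i).toLp (∑ i ∈ s, f i) = ∑ i ∈ s, (hf i).toLp (f i) := by
  classical
  induction s using Finset.induction_on with
  | empty => rfl
  | insert i s hi ih =>
    simp_rw [sum_insert hi, ← ih]
    exact (hf i).toLp_add _

variable [InnerProductSpace ℝ E]

theorem MemLp.norm_toLp_sq {f : Ω → E} (hf : MemLp f 2 μ) :
    ‖hf.toLp f‖ ^ 2 = ∫ ω, ‖f ω‖ ^ 2 ∂μ := by
  rw [← real_inner_self_eq_norm_sq, L2.inner_def]
  refine integral_congr_ae ?_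
  filter_upwards [hf.coeFn_toLp] with ω hω
  rw [hω, real_inner_self_eq_norm_sq]

theorem MemLp.inner_toLp_eq_zero_of_condExp_ae_eq_zero [CompleteSpace E]
    [IsFiniteMeasure μ] (hm : m ≤ mΩ) {X Y : Ω → E} (hX : MemLp X 2 μ) (hY : MemLp Y 2 μ)
    (hXm : AEStronglyMeasurable[m] X μ) (hY0 : μ[Y | m] =ᵐ[μ] 0) :
    ⟪hX.toLp X, hY.toLp Y⟫ = 0 := by
  rw [real_inner_comm, ← inner_condExpL2_eq_inner_fun (𝕜 := ℝ) hm _ _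
    (hXm.congr hX.coeFn_toLp.symm), L2.inner_def]
  refine integral_eq_zero_of_ae ?_
  filter_upwards [hY.condExpL2_ae_eq_condExp (𝕜 := ℝ) hm, hY0] with ω h h0
  simp [h, h0]

end MeasureTheory

theorem LipschitzWith.comp_memLp_of_isFiniteMeasure {Ω E F : Type*} {mΩ : MeasurableSpace Ω}
    {μ : Measure Ω} [IsFiniteMeasure μ] [NormedAddCommGroup E] [NormedAddCommGroup F] {p : ENNReal}
    {K : NNReal} {g : E → F} (hg : LipschitzWith K g) {f : Ω → E} (hf : MemLp f p μ) :
    MemLp (fun ω ↦ g (f ω)) p μ := by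
  refine ((memLp_const ‖g 0‖).add (hf.norm.const_mul K)).of_le
    (hg.continuous.comp_aestronglyMeasurable hf.1) (ae_of_all _ fun ω ↦ ?_)
  calc ‖g (f ω)‖ ≤ ‖g 0‖ + ‖g (f ω) - g 0‖ := norm_le_norm_add_norm_sub' _ _
    _ ≤ ‖g 0‖ + K * ‖f ω‖ := by simpa using hg.norm_sub_le (f ω) 0
    _ ≤ _ := le_abs_self _

theorem norm_sum_range_sq_of_orthogonal {H : Type*} [NormedAddCommGroup H]
    [InnerProductSpace ℝ H] {v : ℕ → H} (hv : ∀ s t, s < t → ⟪v s, v t⟫ = 0) (n : ℕ) :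
    ‖∑ s ∈ range n, v s‖ ^ 2 = ∑ s ∈ range n, ‖v s‖ ^ 2 := by
  induction n with
  | zero => simp
  | succ n ih =>
    have horth : ⟪∑ s ∈ range n, v s, v n⟫ = 0 :=
      (sum_inner _ _ _).trans <| sum_eq_zero fun s hs ↦ hv s n (mem_range.mp hs)
    rw [sum_range_succ, sum_range_succ, norm_add_sq_real, horth, ih]
    ring

theorem le_mul_one_add_pow_of_le_add_mul_sum {a : ℕ → ℝ} {K c : ℝ} {T : ℕ} (hc : 0 ≤ c)
    (h : ∀ t ≤ T, a t ≤ K + c * ∑ s ∈ range t, a s) : ∀ t ≤ T, a t ≤ K * (1 + c) ^ t := by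
  intro t
  induction t using Nat.strong_induction_on with
  | _ t ih =>
    intro ht
    have hsum : ∑ s ∈ range t, a s ≤ ∑ s ∈ range t, K * (1 + c) ^ s :=
      sum_le_sum fun s hs ↦ ih s (mem_range.mp hs) ((mem_range.mp hs).le.trans ht)
    have hgeom : c * ∑ s ∈ range t, (1 + c) ^ s = (1 + c) ^ t - 1 := by
      rw [mul_comm, ← geom_sum_mul, add_sub_cancel_left]
    calc a t ≤ K + c * ∑ s ∈ range t, a s := h t ht
      _ ≤ K + c * ∑ s ∈ range t, K * (1 + c) ^ s := by gcongr
      _ = K * (1 + c) ^ t := by rw [← mul_sum, mul_left_comm, hgeom]; ring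

theorem one_add_pow_le_of_mul_le {c : ℝ} {T : ℕ} (hc : 0 ≤ c) (hTc : T * c ≤ 1 / 24) :
    (1 + c) ^ T ≤ 24 / 23 :=
  calc (1 + c) ^ T ≤ Real.exp c ^ T := by
        gcongr; linarith [Real.add_one_le_exp c]
    _ = Real.exp (T * c) := (Real.exp_nat_mul c T).symm
    _ ≤ Real.exp (1 / 24) := Real.exp_le_exp.mpr hTc
    _ ≤ 1 / (1 - 1 / 24) := Real.exp_bound_div_one_sub_of_interval (by norm_num) (by norm_num)
    _ = 24 / 23 := by norm_num

theorem norm_sum_range_le_of_norm_sub_le_mul_norm_sum {H : Type*} [SeminormedAddCommGroup H]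
    {G ξ : ℕ → H} {c B : ℝ} {T : ℕ} (hc : 0 ≤ c) (hTc : T * c ≤ 1 / 24)
    (hG : ∀ t, ‖G t - G 0‖ ≤ c * ‖∑ s ∈ range t, (G s + ξ s)‖)
    (hξ : ∀ t ≤ T, ‖∑ s ∈ range t, ξ s‖ ≤ B) :
    ‖∑ t ∈ range T, G t‖ ≤ 24 / 23 * T * (‖G 0‖ + c * B) := by
  set K := ‖G 0‖ + c * B
  have hK : 0 ≤ K :=
    add_nonneg (norm_nonneg _) (mul_nonneg hc ((norm_nonneg _).trans (hξ 0 T.zero_le)))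
  have hrec : ∀ t ≤ T, ‖G t‖ ≤ K + c * ∑ s ∈ range t, ‖G s‖ := fun t ht ↦
    calc ‖G t‖ ≤ ‖G 0‖ + ‖G t - G 0‖ := norm_le_norm_add_norm_sub' _ _
      _ ≤ ‖G 0‖ + c * (‖∑ s ∈ range t, G s‖ + ‖∑ s ∈ range t, ξ s‖) := by
        grw [hG t, sum_add_distrib, norm_add_le]
      _ ≤ K + c * ∑ s ∈ range t, ‖G s‖ := by
        grw [norm_sum_le, hξ t ht]; linarith
  have hbound : ∀ t ∈ range T, ‖G t‖ ≤ 24 / 23 * K := fun t ht ↦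
    calc ‖G t‖ ≤ K * (1 + c) ^ t :=
          le_mul_one_add_pow_of_le_add_mul_sum hc hrec t (mem_range.mp ht).le
      _ ≤ K * (1 + c) ^ T := by
        gcongr
        exacts [le_add_of_nonneg_right hc, (mem_range.mp ht).le]
      _ ≤ K * (24 / 23) := by gcongr; exact one_add_pow_le_of_mul_le hc hTc
      _ = 24 / 23 * K := mul_comm _ _
  calc ‖∑ t ∈ range T, G t‖ ≤ ∑ _t ∈ range T, 24 / 23 * K := norm_sum_le_of_le _ hbound
    _ = 24 / 23 * T * K := by rw [sum_const, card_range, nsmul_eq_mul]; ring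

section SGD

variable {Ω E : Type*} {mΩ : MeasurableSpace Ω} {μ : Measure Ω} [IsFiniteMeasure μ]
  [NormedAddCommGroup E] [InnerProductSpace ℝ E] [CompleteSpace E]

theorem norm_sum_range_toLp_sub_sq_le (ℱ : Filtration ℕ mΩ) {g G : ℕ → Ω → E}
    (hg_meas : ∀ t, StronglyMeasurable[ℱ (t + 1)] (g t))
    (hG_meas : ∀ t, StronglyMeasurable[ℱ t] (G t))
    (hg : ∀ t, MemLp (g t) 2 μ) (hG : ∀ t, MemLp (G t) 2 μ)
    (hcond : ∀ t, μ[g t | ℱ t] =ᵐ[μ] G t) {χ : ℝ}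
    (hvar : ∀ t, ∫ ω, ‖g t ω - G t ω‖ ^ 2 ∂μ ≤ χ ^ 2) (n : ℕ) :
    ‖∑ s ∈ range n, ((hg s).sub (hG s)).toLp (g s - G s)‖ ^ 2 ≤ n * χ ^ 2 := by
  have hcond_sub : ∀ t, μ[g t - G t | ℱ t] =ᵐ[μ] 0 := fun t ↦ by
    have hG_int := (hG t).integrable one_le_two
    filter_upwards [condExp_sub ((hg t).integrable one_le_two) hG_int (ℱ t), hcond t]
      with ω h h'
    rw [h, Pi.sub_apply, h', condExp_of_stronglyMeasurable (ℱ.le t) (hG_meas t) hG_int]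
    simp
  have horth : ∀ s t, s < t → ⟪((hg s).sub (hG s)).toLp (g s - G s),
      ((hg t).sub (hG t)).toLp (g t - G t)⟫ = 0 := fun s t hst ↦
    MemLp.inner_toLp_eq_zero_of_condExp_ae_eq_zero (ℱ.le t) _ _
      (((hg_meas s).mono (ℱ.mono hst)).sub
        ((hG_meas s).mono (ℱ.mono hst.le))).aestronglyMeasurable (hcond_sub t)
  rw [norm_sum_range_sq_of_orthogonal horth]
  calc ∑ s ∈ range n, ‖((hg s).sub (hG s)).toLp (g s - G s)‖ ^ 2
      ≤ ∑ _s ∈ range n, χ ^ 2 := sum_le_sum fun s _ ↦ by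
        rw [MemLp.norm_toLp_sq]; exact hvar s
    _ = n * χ ^ 2 := by rw [sum_const, card_range, nsmul_eq_mul]

theorem integral_norm_sum_gradient_sq_le (ℱ : Filtration ℕ mΩ) {F : E → ℝ} {L η χ : ℝ}
    {T : ℕ} (hL : 0 ≤ L) (hη : 0 ≤ η) (hTLη : T * (L * η) ≤ 1 / 24)
    (hsmooth : ∀ x y : E, ‖gradient F x - gradient F y‖ ≤ L * ‖x - y‖) {w g : ℕ → Ω → E}
    (hupd : ∀ t, w (t + 1) = fun ω ↦ w t ω - η • g t ω)
    (hw_meas : ∀ t, StronglyMeasurable[ℱ t] (w t))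
    (hg_meas : ∀ t, StronglyMeasurable[ℱ (t + 1)] (g t))
    (hw_L2 : ∀ t, MemLp (w t) 2 μ) (hg_L2 : ∀ t, MemLp (g t) 2 μ)
    (h_unbiased : ∀ t, μ[g t | ℱ t] =ᵐ[μ] fun ω ↦ gradient F (w t ω))
    (h_var : ∀ t, ∫ ω, ‖g t ω - gradient F (w t ω)‖ ^ 2 ∂μ ≤ χ ^ 2) :
    ∫ ω, ‖∑ t ∈ range T, gradient F (w t ω)‖ ^ 2 ∂μ
      ≤ 3 * T ^ 2 * ∫ ω, ‖gradient F (w 0 ω)‖ ^ 2 ∂μ + 8 * T ^ 3 * η ^ 2 * χ ^ 2 * L ^ 2 := by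
  have hlip : LipschitzWith L.toNNReal (gradient F) :=
    LipschitzWith.of_dist_le' fun x y ↦ by simpa only [dist_eq_norm] using hsmooth x y
  set G : ℕ → Ω → E := fun t ω ↦ gradient F (w t ω)
  have hG_L2 : ∀ t, MemLp (G t) 2 μ := fun t ↦ hlip.comp_memLp_of_isFiniteMeasure (hw_L2 t)
  have hG_meas : ∀ t, StronglyMeasurable[ℱ t] (G t) := fun t ↦
    hlip.continuous.comp_stronglyMeasurable (hw_meas t)
  set Gp : ℕ → Lp E 2 μ := fun t ↦ (hG_L2 t).toLp (G t)
  set ξ : ℕ → Lp E 2 μ := fun t ↦ ((hg_L2 t).sub (hG_L2 t)).toLp (g t - G t)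
  set W : ℕ → Lp E 2 μ := fun t ↦ (hw_L2 t).toLp (w t)
  have hgp : ∀ t, Gp t + ξ t = (hg_L2 t).toLp (g t) := fun t ↦ by
    rw [show ξ t = (hg_L2 t).toLp (g t) - Gp t from MemLp.toLp_sub _ _, add_sub_cancel]
  have hdrift : ∀ t, W t - W 0 = -(η • ∑ s ∈ range t, (Gp s + ξ s)) := by
    intro t
    induction t with
    | zero => simp
    | succ t ih =>
      have hstep : W (t + 1) = W t - η • (Gp t + ξ t) := by
        rw [hgp, ← MemLp.toLp_const_smul, ← MemLp.toLp_sub]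
        exact MemLp.toLp_congr _ _ (.of_eq (hupd t))
      rw [hstep, sub_right_comm, ih, sum_range_succ]
      simp only [smul_add]
      abel
  have hG_lip : ∀ t, ‖Gp t - Gp 0‖ ≤ L * η * ‖∑ s ∈ range t, (Gp s + ξ s)‖ := fun t ↦
    calc ‖Gp t - Gp 0‖ ≤ L * ‖W t - W 0‖ := by
          refine Lp.norm_le_mul_norm_of_ae_le_mul ?_
          rw [← MemLp.toLp_sub, ← MemLp.toLp_sub]
          filter_upwards [((hG_L2 t).sub (hG_L2 0)).coeFn_toLp,
            ((hw_L2 t).sub (hw_L2 0)).coeFn_toLp] with ω hGω hwω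
          rw [hGω, hwω]
          exact hsmooth _ _
      _ = L * η * ‖∑ s ∈ range t, (Gp s + ξ s)‖ := by
          rw [hdrift, norm_neg, norm_smul, Real.norm_of_nonneg hη, mul_assoc]
  have hnoise : ∀ t ≤ T, ‖∑ s ∈ range t, ξ s‖ ≤ √(T * χ ^ 2) := fun t ht ↦ by
    rw [Real.le_sqrt (norm_nonneg _) (by positivity)]
    grw [norm_sum_range_toLp_sub_sq_le ℱ hg_meas hG_meas hg_L2 hG_L2 h_unbiased h_var t, ht]
  have hsum :=
    norm_sum_range_le_of_norm_sub_le_mul_norm_sum (mul_nonneg hL hη) hTLη hG_lip hnoise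
  have hLHS : ∫ ω, ‖∑ t ∈ range T, G t ω‖ ^ 2 ∂μ = ‖∑ t ∈ range T, Gp t‖ ^ 2 := by
    rw [← MemLp.toLp_finsetSum, MemLp.norm_toLp_sq]
    simp only [Finset.sum_apply]
  rw [hLHS, ← (hG_L2 0).norm_toLp_sq]
  have hB : √(T * χ ^ 2) ^ 2 = T * χ ^ 2 := Real.sq_sqrt (by positivity)
  calc ‖∑ t ∈ range T, Gp t‖ ^ 2 ≤ (24 / 23 * T * (‖Gp 0‖ + L * η * √(T * χ ^ 2))) ^ 2 := by
        gcongr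
    _ ≤ (24 / 23) ^ 2 * T ^ 2 * (2 * ‖Gp 0‖ ^ 2 + 2 * (L * η) ^ 2 * √(T * χ ^ 2) ^ 2) := by
        rw [mul_pow, mul_pow]
        gcongr
        nlinarith [sq_nonneg (‖Gp 0‖ - L * η * √(T * χ ^ 2))]
    _ ≤ 3 * T ^ 2 * ‖Gp 0‖ ^ 2 + 8 * T ^ 3 * η ^ 2 * χ ^ 2 * L ^ 2 := by
        rw [hB]
        nlinarith [sq_nonneg (T * ‖Gp 0‖), sq_nonneg (T * L * η * χ), T.cast_nonneg (α := ℝ)]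

end SGD

theorem accumulated_gradient_bound_general
    {E : Type*} [NormedAddCommGroup E] [InnerProductSpace ℝ E] [FiniteDimensional ℝ E]
    {Ω : Type*} {mΩ : MeasurableSpace Ω} {μ : Measure Ω} [IsProbabilityMeasure μ]
    (ℱ : Filtration ℕ mΩ)
    {N : ℕ}
    (f : Fin N → E → ℝ) (L : ℝ)
    (hsmooth : ∀ i, ∀ x y : E, ‖gradient (f i) x - gradient (f i) y‖ ≤ L * ‖x - y‖)
    (T : ℕ) (η : ℝ) (hη : 0 < η) (χ : ℝ)
    (w g : Fin N → ℕ → Ω → E)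
    (hupd : ∀ i t, w i (t + 1) = fun ω => w i t ω - η • g i t ω)
    (hw_meas : ∀ i t, StronglyMeasurable[ℱ t] (w i t))
    (hg_meas : ∀ i t, StronglyMeasurable[ℱ (t + 1)] (g i t))
    (hw_L2 : ∀ i t, MemLp (w i t) 2 μ)
    (hg_L2 : ∀ i t, MemLp (g i t) 2 μ)
    (h_unbiased : ∀ i t, μ[g i t | ℱ t] =ᵐ[μ] fun ω => gradient (f i) (w i t ω))
    (h_var : ∀ i t, ∫ ω, ‖g i t ω - gradient (f i) (w i t ω)‖ ^ 2 ∂μ ≤ χ ^ 2)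
    (hη_small : η ≤ 1 / (24 * T * L)) :
    ∑ i, ∫ ω, ‖∑ t ∈ Finset.range T, gradient (f i) (w i t ω)‖ ^ 2 ∂μ
      ≤ 3 * T ^ 2 * ∑ i, ∫ ω, ‖gradient (f i) (w i 0 ω)‖ ^ 2 ∂μ
        + 8 * T ^ 3 * η ^ 2 * χ ^ 2 * L ^ 2 * N := by
  have h24TL : 0 < 24 * T * L := one_div_pos.mp (hη.trans_le hη_small)
  have hL : 0 ≤ L := (pos_of_mul_pos_right h24TL (by positivity)).le
  have hTLη : T * (L * η) ≤ 1 / 24 := by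
    rw [le_div_iff₀ h24TL] at hη_small
    linarith
  calc ∑ i, ∫ ω, ‖∑ t ∈ range T, gradient (f i) (w i t ω)‖ ^ 2 ∂μ
      ≤ ∑ i, (3 * T ^ 2 * ∫ ω, ‖gradient (f i) (w i 0 ω)‖ ^ 2 ∂μ
        + 8 * T ^ 3 * η ^ 2 * χ ^ 2 * L ^ 2) := sum_le_sum fun i _ ↦
        integral_norm_sum_gradient_sq_le ℱ hL hη.le hTLη (hsmooth i) (hupd i) (hw_meas i)
          (hg_meas i) (hw_L2 i) (hg_L2 i) (h_unbiased i) (h_var i)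
    _ = 3 * T ^ 2 * ∑ i, ∫ ω, ‖gradient (f i) (w i 0 ω)‖ ^ 2 ∂μ
        + 8 * T ^ 3 * η ^ 2 * χ ^ 2 * L ^ 2 * N := by
      rw [sum_add_distrib, ← mul_sum, sum_const, card_univ, Fintype.card_fin, nsmul_eq_mul]
      ring

/-- **Lemma (accumulated gradient bound).** For `N` parallel stochastic-gradient
trajectories with `η ≤ 1/(24TL)`,
`Σᵢ E[‖Σ_t ∇fᵢ(w_{i,t})‖²] ≤ 3T²·Σᵢ E[‖∇fᵢ(wᵢ)‖²] + 8T³η²χ²L²N`. -/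
theorem accumulated_gradient_bound
    {E : Type*} [NormedAddCommGroup E] [InnerProductSpace ℝ E] [FiniteDimensional ℝ E]
    {Ω : Type*} {mΩ : MeasurableSpace Ω} {μ : Measure Ω} [IsProbabilityMeasure μ]
    (ℱ : Filtration ℕ mΩ)
    {N : ℕ} (hN : 0 < N)
    (f : Fin N → E → ℝ) (L : ℝ) (hL : 0 < L)
    (hdiff : ∀ i, Differentiable ℝ (f i))
    (hsmooth : ∀ i, ∀ x y : E, ‖gradient (f i) x - gradient (f i) y‖ ≤ L * ‖x - y‖)
    (T : ℕ) (hT : 1 ≤ T) (η : ℝ) (hη : 0 < η) (χ : ℝ) (hχ : 0 ≤ χ)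
    (w g : Fin N → ℕ → Ω → E)
    (hupd : ∀ i t, w i (t + 1) = fun ω => w i t ω - η • g i t ω)
    (hw_meas : ∀ i t, StronglyMeasurable[ℱ t] (w i t))
    (hg_meas : ∀ i t, StronglyMeasurable[ℱ (t + 1)] (g i t))
    (hw_L2 : ∀ i t, MemLp (w i t) 2 μ)
    (hg_L2 : ∀ i t, MemLp (g i t) 2 μ)
    (h_unbiased : ∀ i t, μ[g i t | ℱ t] =ᵐ[μ] fun ω => gradient (f i) (w i t ω))
    (h_var : ∀ i t, ∫ ω, ‖g i t ω - gradient (f i) (w i t ω)‖ ^ 2 ∂μ ≤ χ ^ 2)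
    (hη_small : η ≤ 1 / (24 * T * L)) :
    ∑ i, ∫ ω, ‖∑ t ∈ Finset.range T, gradient (f i) (w i t ω)‖ ^ 2 ∂μ
      ≤ 3 * T ^ 2 * ∑ i, ∫ ω, ‖gradient (f i) (w i 0 ω)‖ ^ 2 ∂μ
        + 8 * T ^ 3 * η ^ 2 * χ ^ 2 * L ^ 2 * N :=
  accumulated_gradient_bound_general ℱ f L hsmooth T η hη χ w g hupd hw_meas hg_meas hw_L2 hg_L2
    h_unbiased h_var hη_small
end
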